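/- arXiv:2403.15799 — 4 statements merged into one kernel-verified Lean document; each statement's English description precedes it below -/
import Mathlib

section
/- If X is a topological space, μ is a finitely additive probability measure defined on a field of subsets of X, ε > 0, and 𝓕 is a family of measurable sets each of measure at least ε, then the intersection number of 𝓕 is at least ε. Here the intersection number I(𝓕) is the infimum over all finite sequences (F₁,…,Fₙ) of (not necessarily distinct) members of 𝓕 of the quantity i(F⃗)/n, where i(F⃗) is the maximal size of a subset J ⊆ {1,…,n} with ⋂_{j∈J} F_j ≠ ∅. -/
open scoped Classical

/-- `iNum F` is the maximal size of a set `J` of indices such that `⋂ j ∈ J, F j` is nonempty. -/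
noncomputable def iNum {X : Type*} {n : ℕ} (F : Fin n → Set X) : ℕ :=
  ((Finset.univ : Finset (Fin n)).powerset.filter fun J => (⋂ j ∈ J, F j).Nonempty).sup
    Finset.card

/-- The intersection number of a family of sets: the infimum over nonempty finite sequences
`F : Fin n → Set X` of members of `𝓕` of `iNum F / n`. (Valued in `ℝ≥0∞`; the infimum of the
empty set is `∞`.) -/
noncomputable def interNum {X : Type*} (𝓕 : Set (Set X)) : ENNReal :=
  sInf {r | ∃ (n : ℕ) (F : Fin n → Set X), 0 < n ∧ (∀ j, F j ∈ 𝓕) ∧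
    r = (iNum F : ENNReal) / (n : ENNReal)}

/-! Each `F j` has measure at least `ε`, so the `n` sets have total measure at least `ε n`.
Split `X` into the atoms of the Boolean algebra generated by `F 1, …, F n`: an atom lies inside
exactly those `F j` that contain one of its points, so a nonempty atom is counted at most `i(F)`
times, and the total measure is at most `i(F) μ(X) = i(F)`. -/

open MeasureTheory Finset

section FiniteAdditivity

variable {α : Type*} {C : Set (Set α)}

theorem addContent_eq_sum_inter_fiber {G β : Type*} [AddCommMonoid G] [Fintype β]
    (hC : IsSetRing C) (m : AddContent G C) (g : α → β) (hg : ∀ b, g ⁻¹' {b} ∈ C)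
    {s : Set α} (hs : s ∈ C) : m s = ∑ b, m (s ∩ g ⁻¹' {b}) := by
  have hcover : ⋃ b, g ⁻¹' {b} = Set.univ := Set.iUnion_eq_univ_iff.2 fun x => ⟨g x, rfl⟩
  conv_lhs => rw [← Set.inter_univ s, ← hcover, Set.inter_iUnion]
  refine addContent_iUnion (fun b => hC.inter_mem hs (hg b)) ?_ ?_
  · exact fun b b' hbb' => ((pairwise_disjoint_fiber g hbb').mono
      Set.inter_subset_right Set.inter_subset_right)
  · rwa [← Set.inter_iUnion, hcover, Set.inter_univ]

variable {ι : Type*} [Fintype ι]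

/-- The fibres of this map are the atoms of the Boolean algebra generated by the `F i`. -/
noncomputable def indicesContaining (F : ι → Set α) (x : α) : Finset ι := {i | x ∈ F i}

@[simp]
theorem mem_indicesContaining {F : ι → Set α} {x : α} {i : ι} :
    i ∈ indicesContaining F x ↔ x ∈ F i := by
  simp [indicesContaining]

theorem MeasureTheory.IsSetAlgebra.indicesContaining_preimage_mem (hC : IsSetAlgebra C)
    {F : ι → Set α} (hF : ∀ i, F i ∈ C) (J : Finset ι) : indicesContaining F ⁻¹' {J} ∈ C := by
  have hfiber : indicesContaining F ⁻¹' {J} = ⋂ i ∈ univ, if i ∈ J then F i else (F i)ᶜ := by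
    ext x
    simp only [Set.mem_preimage, Set.mem_singleton_iff, Finset.ext_iff, mem_indicesContaining,
      mem_univ, Set.mem_iInter, forall_const]
    refine forall_congr' fun i => ?_
    split_ifs with hi <;> simp [hi]
  rw [hfiber]
  refine hC.biInter_mem _ fun i _ => ?_
  split_ifs
  exacts [hF i, hC.compl_mem (hF i)]

theorem sum_addContent_le_mul_univ (hC : IsSetAlgebra C) (m : AddContent ℝ C)
    (hm : ∀ s ∈ C, 0 ≤ m s) {F : ι → Set α} (hF : ∀ i, F i ∈ C) {k : ℕ}
    (hk : ∀ x, #(indicesContaining F x) ≤ k) : ∑ i, m (F i) ≤ k * m Set.univ := by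
  set P := fun J => indicesContaining F ⁻¹' {J}
  have hP : ∀ J, P J ∈ C := hC.indicesContaining_preimage_mem hF
  have hsplit : ∀ s ∈ C, m s = ∑ J, m (s ∩ P J) :=
    fun s hs => addContent_eq_sum_inter_fiber hC.isSetRing m _ hP hs
  have hatom : ∀ J, ∑ i, m (F i ∩ P J) = #J * m (P J) := by
    intro J
    have hinter : ∀ i, F i ∩ P J = if i ∈ J then P J else ∅ := by
      intro i
      split_ifs with hi
      · exact Set.inter_eq_right.2 fun x (hx : indicesContaining F x = J) =>
          mem_indicesContaining.1 (hx ▸ hi)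
      · exact Set.eq_empty_of_forall_notMem fun x ⟨hxF, (hx : indicesContaining F x = J)⟩ =>
          hi (hx ▸ mem_indicesContaining.2 hxF)
    simp only [hinter, apply_ite m, addContent_empty, sum_ite_mem, univ_inter, sum_const,
      nsmul_eq_mul]
  have hatom_le : ∀ J, (#J : ℝ) * m (P J) ≤ k * m (P J) := by
    intro J
    obtain hempty | ⟨x, hx⟩ := (P J).eq_empty_or_nonempty
    · simp [hempty]
    · refine mul_le_mul_of_nonneg_right ?_ (hm _ (hP J))
      have hxJ : indicesContaining F x = J := hx
      exact_mod_cast hxJ ▸ hk x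
  calc ∑ i, m (F i) = ∑ J, ∑ i, m (F i ∩ P J) := by
        rw [Finset.sum_comm]
        exact sum_congr rfl fun i _ => hsplit _ (hF i)
    _ ≤ ∑ J, (k : ℝ) * m (P J) := sum_le_sum fun J _ => (hatom J).trans_le (hatom_le J)
    _ = k * m Set.univ := by
        rw [← mul_sum, hsplit _ hC.univ_mem]
        simp_rw [Set.univ_inter]

end FiniteAdditivity

theorem card_indicesContaining_le_iNum {X : Type*} {n : ℕ} (F : Fin n → Set X) (x : X) :
    #(indicesContaining F x) ≤ iNum F := by
  refine le_sup (f := card) (mem_filter.2 ⟨mem_powerset.2 (subset_univ _), x, ?_⟩)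
  simp [indicesContaining]

theorem ofReal_le_interNum {X : Type*} {𝓕 : Set (Set X)} {ε : ℝ}
    (h : ∀ n (F : Fin n → Set X), (∀ j, F j ∈ 𝓕) → ε * n ≤ iNum F) :
    ENNReal.ofReal ε ≤ interNum 𝓕 := by
  refine le_sInf ?_
  rintro _ ⟨n, F, hn, hF, rfl⟩
  rw [ENNReal.le_div_iff_mul_le (Or.inl (by exact_mod_cast hn.ne'))
    (Or.inl (ENNReal.natCast_ne_top n))]
  calc ENNReal.ofReal ε * n = ENNReal.ofReal (ε * n) := by
        rw [ENNReal.ofReal_mul' n.cast_nonneg, ENNReal.ofReal_natCast]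
    _ ≤ ENNReal.ofReal (iNum F) := ENNReal.ofReal_le_ofReal (h n F hF)
    _ = iNum F := ENNReal.ofReal_natCast _

theorem stmt0_general {X : Type*} (M : Set (Set X)) (μ : Set X → ℝ)
    (hM_univ : Set.univ ∈ M) (hM_compl : ∀ A ∈ M, Aᶜ ∈ M)
    (hM_union : ∀ A ∈ M, ∀ B ∈ M, A ∪ B ∈ M)
    (hμ_nonneg : ∀ A ∈ M, 0 ≤ μ A) (hμ_prob : μ Set.univ = 1)
    (hμ_add : ∀ A ∈ M, ∀ B ∈ M, Disjoint A B → μ (A ∪ B) = μ A + μ B)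
    (ε : ℝ) (𝓕 : Set (Set X)) (h𝓕 : 𝓕 ⊆ M)
    (hbig : ∀ F ∈ 𝓕, ε ≤ μ F) :
    ENNReal.ofReal ε ≤ interNum 𝓕 := by
  have hM : IsSetAlgebra M :=
    ⟨by simpa using hM_compl _ hM_univ, hM_compl, fun A B hA hB => hM_union A hA B hB⟩
  have hμ_empty : μ ∅ = 0 := by
    have h := hμ_add ∅ hM.empty_mem ∅ hM.empty_mem disjoint_bot_left
    rw [Set.union_self] at h
    linarith
  let m : AddContent ℝ M :=
    hM.isSetRing.addContent_of_union μ hμ_empty fun hA hB => hμ_add _ hA _ hB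
  refine ofReal_le_interNum fun n F hF => ?_
  calc ε * n = ∑ _j : Fin n, ε := by simp [mul_comm]
    _ ≤ ∑ j, m (F j) := sum_le_sum fun j _ => hbig _ (hF j)
    _ ≤ iNum F * m Set.univ := sum_addContent_le_mul_univ hM m hμ_nonneg (fun j => h𝓕 (hF j))
        (card_indicesContaining_le_iNum F)
    _ = iNum F := by
      change _ * μ Set.univ = _
      rw [hμ_prob, mul_one]

/-- If `μ` is a finitely additive probability measure on a field `M` of subsets of `X` and `𝓕`
is a family of measurable sets each of measure at least `ε > 0`, then the intersection number
of `𝓕` is at least `ε`. -/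
theorem stmt0 {X : Type*} (M : Set (Set X)) (μ : Set X → ℝ)
    (hM_univ : Set.univ ∈ M) (hM_compl : ∀ A ∈ M, Aᶜ ∈ M)
    (hM_union : ∀ A ∈ M, ∀ B ∈ M, A ∪ B ∈ M)
    (hμ_nonneg : ∀ A ∈ M, 0 ≤ μ A) (hμ_prob : μ Set.univ = 1)
    (hμ_add : ∀ A ∈ M, ∀ B ∈ M, Disjoint A B → μ (A ∪ B) = μ A + μ B)
    (ε : ℝ) (hε : 0 < ε) (𝓕 : Set (Set X)) (h𝓕 : 𝓕 ⊆ M)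
    (hbig : ∀ F ∈ 𝓕, ε ≤ μ F) :
    ENNReal.ofReal ε ≤ interNum 𝓕 :=
  stmt0_general M μ hM_univ hM_compl hM_union hμ_nonneg hμ_prob hμ_add ε 𝓕 h𝓕 hbig
end

section
/- If a topological space X has a σ-disjoint π-base and πw(X) is a singular cardinal of countable cofinality, then the cellularity of X equals πw(X), i.e., c(X) = sup of cardinalities of cellular families in X equals πw(X). -/
/-- A π-base for `X`: a family of nonempty open sets such that every nonempty open set
contains a member of the family. -/
def IsPiBase (X : Type*) [TopologicalSpace X] (𝓟 : Set (Set X)) : Prop :=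
  (∀ P ∈ 𝓟, IsOpen P ∧ P.Nonempty) ∧ ∀ U : Set X, IsOpen U → U.Nonempty → ∃ P ∈ 𝓟, P ⊆ U

/-- The π-weight of `X`: the least cardinality of a π-base. -/
noncomputable def piWeight (X : Type*) [TopologicalSpace X] : Cardinal :=
  sInf {c | ∃ 𝓟 : Set (Set X), IsPiBase X 𝓟 ∧ c = Cardinal.mk 𝓟}

/-- A cellular family: a pairwise disjoint family of nonempty open sets. -/
def IsCellular {X : Type*} [TopologicalSpace X] (𝓤 : Set (Set X)) : Prop :=
  (∀ U ∈ 𝓤, IsOpen U ∧ U.Nonempty) ∧ 𝓤.PairwiseDisjoint id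

/-- The cellularity of `X`: the supremum of the cardinalities of cellular families. -/
noncomputable def cellularity (X : Type*) [TopologicalSpace X] : Cardinal :=
  ⨆ 𝓤 : {𝓤 : Set (Set X) // IsCellular 𝓤}, Cardinal.mk 𝓤.1

/-!
Every cellular family injects into any π-base (send each cell to a π-base member inside it; the
cells are disjoint and the members nonempty), so `c(X) ≤ πw(X)`. Conversely, each layer of a
σ-disjoint π-base is itself cellular, so the π-base has size at most `ℵ₀ · c(X)`; once `πw(X)` is
uncountable this forces `πw(X) ≤ c(X)`.
-/

open Cardinal

section PiWeightCellularity

variable {X : Type*} [TopologicalSpace X]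

theorem isPiBase_setOf_isOpen_nonempty : IsPiBase X {U : Set X | IsOpen U ∧ U.Nonempty} :=
  ⟨fun _ hP => hP, fun U hU hne => ⟨U, ⟨hU, hne⟩, subset_rfl⟩⟩

theorem IsPiBase.piWeight_le_mk {𝓟 : Set (Set X)} (h𝓟 : IsPiBase X 𝓟) : piWeight X ≤ #𝓟 :=
  csInf_le' ⟨𝓟, h𝓟, rfl⟩

theorem exists_isPiBase_mk_eq_piWeight : ∃ 𝓟 : Set (Set X), IsPiBase X 𝓟 ∧ #𝓟 = piWeight X := by
  obtain ⟨𝓟, h𝓟, hcard⟩ := csInf_mem (s := {c | ∃ 𝓟 : Set (Set X), IsPiBase X 𝓟 ∧ c = #𝓟})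
    ⟨_, _, isPiBase_setOf_isOpen_nonempty, rfl⟩
  exact ⟨𝓟, h𝓟, hcard.symm⟩

theorem IsCellular.mk_le_of_isPiBase {𝓤 𝓟 : Set (Set X)} (h𝓤 : IsCellular 𝓤)
    (h𝓟 : IsPiBase X 𝓟) : #𝓤 ≤ #𝓟 := by
  have hinside : ∀ U : 𝓤, ∃ P : 𝓟, (P : Set X) ⊆ U := fun ⟨U, hU⟩ => by
    obtain ⟨P, hP, hPU⟩ := h𝓟.2 U (h𝓤.1 U hU).1 (h𝓤.1 U hU).2
    exact ⟨⟨P, hP⟩, hPU⟩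
  choose f hf using hinside
  refine mk_le_of_injective (f := f) fun U V hUV => Subtype.ext ?_
  by_contra hne
  obtain ⟨x, hx⟩ := (h𝓟.1 _ (f U).2).2
  exact Set.disjoint_left.mp (h𝓤.2 U.2 V.2 hne) (hf U hx) (hf V (hUV ▸ hx))

theorem IsCellular.mk_le_cellularity {𝓤 : Set (Set X)} (h𝓤 : IsCellular 𝓤) :
    #𝓤 ≤ cellularity X :=
  le_ciSup bddAbove_of_small (⟨𝓤, h𝓤⟩ : {𝓤 : Set (Set X) // IsCellular 𝓤})

theorem cellularity_le_piWeight : cellularity X ≤ piWeight X := by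
  have : Nonempty {𝓤 : Set (Set X) // IsCellular 𝓤} :=
    ⟨⟨∅, fun _ h => absurd h (Set.notMem_empty _), Set.pairwiseDisjoint_empty⟩⟩
  obtain ⟨𝓟, h𝓟, hcard⟩ := exists_isPiBase_mk_eq_piWeight (X := X)
  exact ciSup_le fun 𝓤 => hcard ▸ 𝓤.2.mk_le_of_isPiBase h𝓟

theorem piWeight_le_max_aleph0_cellularity_of_sigma_disjoint (𝓑 : ℕ → Set (Set X))
    (hpb : IsPiBase X (⋃ n, 𝓑 n)) (hdisj : ∀ n, (𝓑 n).PairwiseDisjoint id) :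
    piWeight X ≤ max ℵ₀ (cellularity X) := by
  have hlayer : ∀ n, #(𝓑 n) ≤ cellularity X := fun n =>
    IsCellular.mk_le_cellularity ⟨fun U hU => hpb.1 U (Set.mem_iUnion.2 ⟨n, hU⟩), hdisj n⟩
  calc piWeight X ≤ #(⋃ n, 𝓑 n) := hpb.piWeight_le_mk
    _ ≤ ℵ₀ * ⨆ n, #(𝓑 n) := by simpa using mk_iUnion_le_lift 𝓑
    _ ≤ ℵ₀ * cellularity X := by gcongr; exact ciSup_le hlayer
    _ ≤ max ℵ₀ (cellularity X) := mul_le_max_of_aleph0_le_left le_rfl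

end PiWeightCellularity

theorem stmt3_general {X : Type*} [TopologicalSpace X] (𝓑 : ℕ → Set (Set X))
    (hpb : IsPiBase X (⋃ n, 𝓑 n)) (hdisj : ∀ n, (𝓑 n).PairwiseDisjoint id)
    (hsing : Cardinal.aleph0 < piWeight X) :
    cellularity X = piWeight X := by
  refine cellularity_le_piWeight.antisymm ?_
  have h := piWeight_le_max_aleph0_cellularity_of_sigma_disjoint 𝓑 hpb hdisj
  exact (le_max_iff.mp h).resolve_left hsing.not_ge

/-- If `X` has a σ-disjoint π-base and `πw(X)` is a singular cardinal of countable cofinality,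
then the cellularity of `X` equals `πw(X)`. -/
theorem stmt3 {X : Type*} [TopologicalSpace X] (𝓑 : ℕ → Set (Set X))
    (hpb : IsPiBase X (⋃ n, 𝓑 n)) (hdisj : ∀ n, (𝓑 n).PairwiseDisjoint id)
    (hsing : Cardinal.aleph0 < piWeight X) (hcof : (piWeight X).ord.cof = Cardinal.aleph0) :
    cellularity X = piWeight X :=
  stmt3_general 𝓑 hpb hdisj hsing
end

section
/- Let P be a ccc partial order (every antichain in P is countable) and E ⊆ P. Let X = {A ⊆ E : A is centered in P} viewed as a closed subspace of 2^E. Then X is ccc: every pairwise disjoint family of nonempty open subsets of X is countable. -/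
/-- Δ-system lemma (uncountable version), indexed form: an uncountable index family of
finsets all of the same cardinality has an uncountable subfamily forming a Δ-system. -/
theorem deltaSystem_aux {α ι : Type*} [DecidableEq α] :
    ∀ (n : ℕ) (f : ι → Finset α) (J : Set ι), ¬J.Countable →
      (∀ i ∈ J, (f i).card = n) →
      ∃ J' ⊆ J, ¬J'.Countable ∧ ∃ R : Finset α,
        ∀ i ∈ J', ∀ j ∈ J', i ≠ j → f i ∩ f j = R := by
  intro n
  induction n with
  | zero =>
    intro f J hJ hcard
    refine ⟨J, subset_rfl, hJ, ∅, fun i hi j hj _ => ?_⟩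
    rw [Finset.card_eq_zero.mp (hcard i hi), Finset.empty_inter]
  | succ n ih =>
    intro f J hJ hcard
    by_cases hx : ∃ x, ¬{i ∈ J | x ∈ f i}.Countable
    · obtain ⟨x, hx⟩ := hx
      obtain ⟨J', hsub, hunc, R, hroot⟩ := ih (fun i => (f i).erase x) {i ∈ J | x ∈ f i} hx
        (fun i hi => by rw [Finset.card_erase_of_mem hi.2, hcard i hi.1]; rfl)
      refine ⟨J', fun i hi => (hsub hi).1, hunc, insert x R, ?_⟩
      intro i hi j hj hij
      have hxi := (hsub hi).2
      have hxj := (hsub hj).2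
      have hR := hroot i hi j hj hij
      ext a
      simp only [Finset.mem_inter, Finset.mem_insert]
      constructor
      · rintro ⟨hai, haj⟩
        by_cases ha : a = x
        · exact Or.inl ha
        · right
          rw [← hR]
          simp [Finset.mem_erase, ha, hai, haj]
      · rintro (rfl | haR)
        · exact ⟨hxi, hxj⟩
        · rw [← hR] at haR
          simp only [Finset.mem_inter, Finset.mem_erase] at haR
          exact ⟨haR.1.2, haR.2.2⟩
    · push_neg at hx
      have hzorn : ∀ c ⊆ {M : Set ι | M ⊆ J ∧ ∀ i ∈ M, ∀ j ∈ M, i ≠ j → f i ∩ f j = ∅},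
          IsChain (· ⊆ ·) c → ∃ ub ∈ {M : Set ι | M ⊆ J ∧ ∀ i ∈ M, ∀ j ∈ M, i ≠ j → f i ∩ f j = ∅},
            ∀ s ∈ c, s ⊆ ub := by
        intro c hc hchain
        refine ⟨⋃₀ c, ⟨Set.sUnion_subset fun s hs => (hc hs).1, ?_⟩,
          fun s hs => Set.subset_sUnion_of_mem hs⟩
        rintro i ⟨s₁, hs₁, hi⟩ j ⟨s₂, hs₂, hj⟩ hij
        rcases eq_or_ne s₁ s₂ with rfl | hss
        · exact (hc hs₁).2 i hi j hj hij
        · rcases hchain hs₁ hs₂ hss with h | h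
          · exact (hc hs₂).2 i (h hi) j hj hij
          · exact (hc hs₁).2 i hi j (h hj) hij
      obtain ⟨M, hM⟩ := zorn_subset
          {M : Set ι | M ⊆ J ∧ ∀ i ∈ M, ∀ j ∈ M, i ≠ j → f i ∩ f j = ∅} hzorn
      by_cases hMc : M.Countable
      · exfalso
        apply hJ
        have hcover : J ⊆ ⋃ i ∈ M, ⋃ x ∈ (f i : Set α), {j ∈ J | x ∈ f j} := by
          intro i hi
          by_cases hiM : i ∈ M
          · have hne : (f i).Nonempty := Finset.card_pos.mp (by rw [hcard i hi]; omega)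
            obtain ⟨x, hx'⟩ := hne
            exact Set.mem_biUnion hiM (Set.mem_biUnion (Finset.mem_coe.mpr hx') ⟨hi, hx'⟩)
          · have hni : insert i M ∉
                {M : Set ι | M ⊆ J ∧ ∀ i ∈ M, ∀ j ∈ M, i ≠ j → f i ∩ f j = ∅} :=
              fun hmem => hiM (hM.2 hmem (Set.subset_insert i M) (Set.mem_insert i M))
            have hsubJ : insert i M ⊆ J := Set.insert_subset hi hM.1.1
            have hnp : ¬∀ a ∈ insert i M, ∀ b ∈ insert i M, a ≠ b → f a ∩ f b = ∅ :=
              fun h => hni ⟨hsubJ, h⟩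
            push_neg at hnp
            obtain ⟨a, ha, b, hb, hab, hfab⟩ := hnp
            rcases Set.mem_insert_iff.mp ha with rfl | haM
            · rcases Set.mem_insert_iff.mp hb with rfl | hbM
              · exact absurd rfl hab
              · obtain ⟨x, hx'⟩ := hfab
                rcases Finset.mem_inter.mp hx' with ⟨hxa, hxb⟩
                exact Set.mem_biUnion hbM (Set.mem_biUnion (Finset.mem_coe.mpr hxb) ⟨hi, hxa⟩)
            · rcases Set.mem_insert_iff.mp hb with rfl | hbM
              · obtain ⟨x, hx'⟩ := hfab
                rcases Finset.mem_inter.mp hx' with ⟨hxa, hxb⟩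
                exact Set.mem_biUnion haM (Set.mem_biUnion (Finset.mem_coe.mpr hxa) ⟨hi, hxb⟩)
              · exact absurd (hM.1.2 a haM b hbM hab) (Finset.nonempty_iff_ne_empty.mp hfab)
        exact ((hMc.biUnion fun i _ =>
          ((f i).countable_toSet.biUnion fun x _ => hx x)).mono hcover)
      · exact ⟨M, hM.1.1, hMc, ∅, hM.1.2⟩

/-- From an open set in a subspace of a product of `Bool`s, extract a finite
cylinder condition around any of its points. -/
theorem cyl_aux {ι : Type*} {X : Set (ι → Bool)} {U : Set X} (hU : IsOpen U) (χ : X)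
    (hχ : χ ∈ U) :
    ∃ I : Finset ι, ∀ ψ : X, (∀ e ∈ I, (ψ : ι → Bool) e = (χ : ι → Bool) e) → ψ ∈ U := by
  obtain ⟨V, hV, hVU⟩ := isOpen_induced_iff.mp hU
  have hχV : (χ : ι → Bool) ∈ V := by rw [← hVU] at hχ; exact hχ
  obtain ⟨I, u, hu, hsub⟩ := isOpen_pi_iff.mp hV _ hχV
  refine ⟨I, fun ψ hψ => ?_⟩
  rw [← hVU]
  apply hsub
  intro i hi
  rw [hψ i (Finset.mem_coe.mp hi)]
  exact (hu i (Finset.mem_coe.mp hi)).2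

/-- If `P` is a ccc partial order and `E ⊆ P`, then the space
`X = {A ⊆ E : A is centered in P} ⊆ 2^E` is ccc: every pairwise disjoint family of nonempty
open subsets of `X` is countable. -/
theorem stmt6 {P : Type*} [PartialOrder P]
    (hccc : ∀ A : Set P, (A.Pairwise fun p q => ¬∃ r, r ≤ p ∧ r ≤ q) → A.Countable)
    (E : Set P) (X : Set (E → Bool))
    (hX : X = {χ : E → Bool | ∀ F : Finset E, (∀ e ∈ F, χ e = true) →
      ∃ q : P, ∀ e ∈ F, q ≤ (e : P)})
    (𝓤 : Set (Set X)) (hopen : ∀ U ∈ 𝓤, IsOpen U ∧ U.Nonempty)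
    (hdisj : 𝓤.PairwiseDisjoint id) :
    𝓤.Countable := by
  classical
  by_contra hU
  -- choose a point and cylinder for each member of 𝓤
  have hchoice : ∀ U : 𝓤, ∃ (χ : X) (I : Finset E), χ ∈ (U : Set X) ∧
      ∀ ψ : X, (∀ e ∈ I, (ψ : E → Bool) e = (χ : E → Bool) e) → ψ ∈ (U : Set X) := by
    intro U
    obtain ⟨hUo, χ, hχ⟩ := hopen U.1 U.2
    obtain ⟨I, hI⟩ := cyl_aux hUo χ hχ
    exact ⟨χ, I, hχ, hI⟩
  choose χ F hmem hcyl using hchoice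
  set T : 𝓤 → Finset E := fun U => (F U).filter (fun e => (χ U : E → Bool) e = true) with hT
  have hTsub : ∀ U, T U ⊆ F U := fun U => Finset.filter_subset _ _
  -- common lower bounds of the positive parts
  have hq' : ∀ U : 𝓤, ∃ q : P, ∀ e ∈ T U, q ≤ (e : P) := by
    intro U
    have h2 : (χ U : E → Bool) ∈ {χ : E → Bool | ∀ F : Finset E, (∀ e ∈ F, χ e = true) →
        ∃ q : P, ∀ e ∈ F, q ≤ (e : P)} := by rw [← hX]; exact (χ U).2
    exact h2 (T U) (fun e he => (Finset.mem_filter.mp he).2)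
  choose q hq using hq'
  -- indicator functions
  let ind : Finset E → (E → Bool) := fun T' e => decide (e ∈ T')
  have hindX : ∀ T' : Finset E, (∃ r : P, ∀ e ∈ T', r ≤ (e : P)) → ind T' ∈ X := by
    rintro T' ⟨r, hr⟩
    rw [hX]
    intro G hG
    exact ⟨r, fun e he => hr e (of_decide_eq_true (hG e he))⟩
  -- key membership lemma
  have hkey : ∀ (U : 𝓤) (T' : Finset E), T U ⊆ T' → (∀ e ∈ T', e ∈ F U → e ∈ T U) →
      ∀ (hx : ind T' ∈ X), (⟨ind T', hx⟩ : X) ∈ (U : Set X) := by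
    intro U T' h1 h2 hx
    apply hcyl U
    intro e he
    by_cases hTe : (χ U : E → Bool) e = true
    · have heT : e ∈ T U := Finset.mem_filter.mpr ⟨he, hTe⟩
      simp only [ind, hTe, decide_eq_true_eq]
      exact h1 heT
    · have hnotT : e ∉ T' := fun hmem' => hTe (Finset.mem_filter.mp (h2 e hmem' he)).2
      simp only [ind, hnotT, decide_eq_false_iff_not]
      cases h : (χ U : E → Bool) e
      · simp
      · exact absurd h hTe
  -- uncountability of the index type
  have huniv : ¬(Set.univ : Set ↥𝓤).Countable := by
    intro h
    exact hU (Set.countable_coe_iff.mp (Set.countable_univ_iff.mp h))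
  -- constant cardinality
  obtain ⟨n, J0, hJ0unc, hJ0card⟩ : ∃ (n : ℕ) (J0 : Set ↥𝓤), ¬J0.Countable ∧
      ∀ i ∈ J0, (F i).card = n := by
    by_contra h
    push_neg at h
    apply huniv
    have hsub : (Set.univ : Set ↥𝓤) ⊆ ⋃ n, {i : ↥𝓤 | (F i).card = n} :=
      fun i _ => Set.mem_iUnion.mpr ⟨(F i).card, rfl⟩
    refine (Set.countable_iUnion fun n => ?_).mono hsub
    by_contra hc
    obtain ⟨i, hi, hne⟩ := h n _ hc
    exact hne hi
  -- Δ-system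
  obtain ⟨J1, hJ1sub, hJ1unc, R, hroot⟩ := deltaSystem_aux n F J0 hJ0unc hJ0card
  -- constant trace of T on the root
  obtain ⟨S, J2, hJ2sub, hJ2unc, hTS⟩ : ∃ (S : Finset E) (J2 : Set ↥𝓤), J2 ⊆ J1 ∧
      ¬J2.Countable ∧ ∀ i ∈ J2, T i ∩ R = S := by
    by_contra h
    push_neg at h
    apply hJ1unc
    have hsub : J1 ⊆ ⋃ S ∈ R.powerset, {i ∈ J1 | T i ∩ R = S} := by
      intro i hi
      exact Set.mem_biUnion (Finset.mem_coe.mpr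
        (Finset.mem_powerset.mpr Finset.inter_subset_right)) ⟨hi, rfl⟩
    refine (Set.Countable.biUnion (R.powerset : Finset (Finset E)).countable_toSet
      (fun S _ => ?_)).mono hsub
    by_contra hc
    obtain ⟨i, hi, hne⟩ := h S _ (Set.sep_subset _ _) hc
    exact hne hi.2
  -- pairwise incompatibility of the chosen lower bounds
  have hincomp : ∀ i ∈ J2, ∀ j ∈ J2, i ≠ j → ¬∃ r, r ≤ q i ∧ r ≤ q j := by
    rintro i hi j hj hij ⟨r, hri, hrj⟩
    have hr : ∀ e ∈ T i ∪ T j, r ≤ (e : P) := by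
      intro e he
      rcases Finset.mem_union.mp he with h | h
      · exact hri.trans (hq i e h)
      · exact hrj.trans (hq j e h)
    have hx : ind (T i ∪ T j) ∈ X := hindX _ ⟨r, hr⟩
    have hijne : i ≠ j := hij
    have hRij : F i ∩ F j = R := hroot i (hJ2sub hi) j (hJ2sub hj) hijne
    have hmix : ∀ a b : ↥𝓤, a ∈ J2 → b ∈ J2 → F a ∩ F b = R →
        ∀ e ∈ T a ∪ T b, e ∈ F a → e ∈ T a := by
      intro a b ha hb hRab e he hFa
      rcases Finset.mem_union.mp he with h | h
      · exact h
      · have heR : e ∈ R := by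
          rw [← hRab]
          exact Finset.mem_inter.mpr ⟨hFa, hTsub b h⟩
        have heS : e ∈ S := by
          rw [← hTS b hb]
          exact Finset.mem_inter.mpr ⟨h, heR⟩
        have : e ∈ T a ∩ R := by rw [hTS a ha]; exact heS
        exact (Finset.mem_inter.mp this).1
    have hmi := hkey i (T i ∪ T j) Finset.subset_union_left
      (hmix i j hi hj hRij) hx
    have hmj' : ∀ e ∈ T i ∪ T j, e ∈ F j → e ∈ T j := by
      intro e he hFj
      exact hmix j i hj hi (by rw [Finset.inter_comm]; exact hRij) e
        (by rwa [Finset.union_comm]) hFj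
    have hmj := hkey j (T i ∪ T j) Finset.subset_union_right hmj' hx
    have hd : Disjoint (i : Set X) (j : Set X) :=
      hdisj i.2 j.2 (fun h => hijne (Subtype.ext h))
    exact Set.disjoint_left.mp hd hmi hmj
  -- build an uncountable antichain
  have hqinj : Set.InjOn q J2 := by
    intro i hi j hj hqeq
    by_contra hne
    exact hincomp i hi j hj hne ⟨q i, le_refl _, hqeq ▸ le_refl _⟩
  have hA : (q '' J2).Pairwise fun p₁ p₂ => ¬∃ r, r ≤ p₁ ∧ r ≤ p₂ := by
    rintro _ ⟨i, hi, rfl⟩ _ ⟨j, hj, rfl⟩ hne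
    exact hincomp i hi j hj (fun h => hne (by rw [h]))
  exact hJ2unc (Set.countable_of_injective_of_countable_image hqinj (hccc _ hA))
end

section
/- Let κ be a cardinal and 𝓕 ⊆ [κ]^ω a locally countable family (every uncountable 𝓖 ⊆ 𝓕 has uncountable union), where each a ∈ 𝓕 is identified with its increasing enumeration a : ω → κ. For a ≠ b in 𝓕 let Δ(a,b) be the least n with a(n) ≠ b(n). Define X = {A ⊆ 𝓕 : for all 3-element subsets {a,b,c} of A, |{Δ(a,b), Δ(b,c), Δ(a,c)}| > 1}. Then every element A of X is countable. -/
/-- For distinct `a b : ℕ → ι`, `sdelta a b` is the least `n` with `a n ≠ b n`. -/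
noncomputable def sdelta {ι : Type*} (a b : ℕ → ι) : ℕ :=
  sInf {n | a n ≠ b n}

lemma sdelta_eq_of {ι : Type*} {a b : ℕ → ι} {n : ℕ}
    (h1 : ∀ i < n, a i = b i) (h2 : a n ≠ b n) : sdelta a b = n := by
  refine le_antisymm (Nat.sInf_le h2) ?_
  by_contra h
  push_neg at h
  have hm := Nat.sInf_mem (⟨n, h2⟩ : {m | a m ≠ b m}.Nonempty)
  exact hm (h1 _ h)

lemma small_of_three {ι : Type*} (S : Set ι)
    (h : ∀ x ∈ S, ∀ y ∈ S, ∀ z ∈ S, x = y ∨ x = z ∨ y = z) : S.Finite := by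
  by_cases hs : S.Subsingleton
  · exact hs.finite
  · rw [Set.not_subsingleton_iff] at hs
    obtain ⟨x, hx, y, hy, hxy⟩ := hs
    apply Set.Finite.subset ((Set.finite_singleton y).insert x)
    intro z hz
    rcases h z hz x hx y hy with h' | h' | h'
    · exact Or.inl h'
    · exact Or.inr h'
    · exact absurd h' hxy

/-- If `𝓕` is a locally countable family of (increasing enumerations of) countable subsets of
`κ`, then every `A ⊆ 𝓕` such that every 3-element subset `{a,b,c}` of `A` satisfies
`|{Δ(a,b), Δ(b,c), Δ(a,c)}| > 1` is countable. -/
theorem stmt9 {ι : Type*} [LinearOrder ι] (𝓕 : Set (ℕ → ι))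
    (hmono : ∀ a ∈ 𝓕, StrictMono a)
    (hloc : ∀ 𝓖 ⊆ 𝓕, ¬𝓖.Countable → ¬(⋃ a ∈ 𝓖, Set.range a).Countable)
    (A : Set (ℕ → ι)) (hA : A ⊆ 𝓕)
    (htri : ∀ a ∈ A, ∀ b ∈ A, ∀ c ∈ A, a ≠ b → a ≠ c → b ≠ c →
      ¬(sdelta a b = sdelta b c ∧ sdelta b c = sdelta a c)) :
    A.Countable := by
  by_contra hc
  refine hloc A hA hc ?_
  -- the tree of finite restrictions of elements of `A` has finite levels
  have key : ∀ n : ℕ, ((fun (a : ℕ → ι) (i : Fin n) => a i) '' A).Finite := by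
    intro n
    induction n with
    | zero =>
      exact Set.Subsingleton.finite (fun f _ g _ => Subsingleton.elim f g)
    | succ n ih =>
      have cover : (fun (a : ℕ → ι) (i : Fin (n+1)) => a i) '' A ⊆
          ⋃ t ∈ (fun (a : ℕ → ι) (i : Fin n) => a i) '' A,
            {f : Fin (n+1) → ι | f ∈ (fun (a : ℕ → ι) (i : Fin (n+1)) => a i) '' A ∧
              (fun i : Fin n => f i.castSucc) = t} := by
        rintro f ⟨a, ha, rfl⟩
        exact Set.mem_biUnion ⟨a, ha, rfl⟩ ⟨⟨a, ha, rfl⟩, rfl⟩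
      refine Set.Finite.subset (Set.Finite.biUnion ih ?_) cover
      rintro t -
      set Fib : Set (Fin (n+1) → ι) :=
        {f : Fin (n+1) → ι | f ∈ (fun (a : ℕ → ι) (i : Fin (n+1)) => a i) '' A ∧
          (fun i : Fin n => f i.castSucc) = t} with hFib
      have hinj : Set.InjOn (fun f : Fin (n+1) → ι => f (Fin.last n)) Fib := by
        rintro f ⟨-, hf⟩ g ⟨-, hg⟩ hfg
        funext i
        induction i using Fin.lastCases with
        | last => exact hfg
        | cast i =>
          have h1 := congrFun hf i
          have h2 := congrFun hg i
          rw [h1, h2]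
      have himg : ((fun f : Fin (n+1) → ι => f (Fin.last n)) '' Fib).Finite := by
        apply small_of_three
        rintro x ⟨f, ⟨⟨a, ha, rfl⟩, hft⟩, rfl⟩ y ⟨g, ⟨⟨b, hb, rfl⟩, hgt⟩, rfl⟩
          z ⟨k, ⟨⟨c, hcc, rfl⟩, hkt⟩, rfl⟩
        simp only [Fin.val_last]
        by_contra hcon
        push_neg at hcon
        obtain ⟨hxy, hxz, hyz⟩ := hcon
        have hab : ∀ i < n, a i = b i := by
          intro i hi
          have h1 := congrFun hft ⟨i, hi⟩
          have h2 := congrFun hgt ⟨i, hi⟩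
          simp only [Fin.coe_castSucc] at h1 h2
          rw [h1, h2]
        have hbc : ∀ i < n, b i = c i := by
          intro i hi
          have h1 := congrFun hgt ⟨i, hi⟩
          have h2 := congrFun hkt ⟨i, hi⟩
          simp only [Fin.coe_castSucc] at h1 h2
          rw [h1, h2]
        have hac : ∀ i < n, a i = c i := fun i hi => (hab i hi).trans (hbc i hi)
        have dab : sdelta a b = n := sdelta_eq_of hab hxy
        have dbc : sdelta b c = n := sdelta_eq_of hbc hyz
        have dac : sdelta a c = n := sdelta_eq_of hac hxz
        have hab' : a ≠ b := fun h => hxy (by rw [h])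
        have hac' : a ≠ c := fun h => hxz (by rw [h])
        have hbc' : b ≠ c := fun h => hyz (by rw [h])
        exact htri a ha b hb c hcc hab' hac' hbc' ⟨dab.trans dbc.symm, dbc.trans dac.symm⟩
      exact Set.Finite.of_finite_image himg hinj
  -- hence the union of ranges is countable
  have hsub : (⋃ a ∈ A, Set.range a) ⊆ ⋃ n : ℕ, (fun a : ℕ → ι => a n) '' A := by
    intro x hx
    simp only [Set.mem_iUnion, Set.mem_range, Set.mem_image] at hx ⊢
    obtain ⟨a, ha, n, rfl⟩ := hx
    exact ⟨n, a, ha, rfl⟩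
  refine Set.Countable.mono hsub (Set.countable_iUnion fun n => ?_)
  have heq : (fun a : ℕ → ι => a n) '' A =
      (fun f : Fin (n+1) → ι => f (Fin.last n)) '' ((fun (a : ℕ → ι) (i : Fin (n+1)) => a i) '' A) := by
    rw [Set.image_image]
    simp [Fin.val_last]
  rw [heq]
  exact ((key (n+1)).image _).countable
end
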